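/- Every countably branching process in an LTS can be denoted, up to strong bisimilarity, by a closed CCSP expression using only inaction 0, action prefixing, choice, and (possibly unguarded) recursion; moreover a countable choice ∑_{i∈ℕ} α_i.P_i can be expressed via the unguarded recursive specification ⟨z₀ | {z_i = α_i.P_i + z_{i+1} | i∈ℕ}⟩. -/

import Mathlib

/-- Actions of an LTS with time-outs. -/
inductive Act (A : Type) where
  | vis (a : A)
  | tau
  | to

/-- CCSP expressions built from inaction `0`, action prefixing, binary choice,
variables and recursion `⟨x|S⟩` (a recursive specification `S` binds all
variables of the variable type `V`). -/
inductive Expr (A V : Type) where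
  | nil
  | pre (α : Act A) (E : Expr A V)
  | choice (E F : Expr A V)
  | var (x : V)
  | fix (x : V) (S : V → Expr A V)

/-- Substitution of closed expressions for free variables. -/
def subst {A V : Type} : Expr A V → (V → Expr A V) → Expr A V
  | .nil, _ => .nil
  | .pre α E, σ => .pre α (subst E σ)
  | .choice E F, σ => .choice (subst E σ) (subst F σ)
  | .var x, σ => σ x
  | .fix x S, _ => .fix x S

/-- The operational semantics of the recursive fragment of CCSP. -/
inductive ETr {A V : Type} : Expr A V → Act A → Expr A V → Prop where
  | pre (α : Act A) (E : Expr A V) : ETr (.pre α E) α E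
  | choiceL {E α E'} (F) : ETr E α E' → ETr (.choice E F) α E'
  | choiceR {F α F'} (E) : ETr F α F' → ETr (.choice E F) α F'
  | fix {x S α E'} :
      ETr (subst (S x) (fun y => .fix y S)) α E' → ETr (.fix x S) α E'

/-- Closed expressions: every variable occurrence is bound by a recursion. -/
def Closed {A V : Type} : Expr A V → Prop
  | .nil => True
  | .pre _ E => Closed E
  | .choice E F => Closed E ∧ Closed F
  | .var _ => False
  | .fix _ _ => True

/-- The disjoint union of two LTSs over the same action alphabet. -/
def SumTr {A P1 P2 : Type} (T1 : P1 → Act A → P1 → Prop)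
    (T2 : P2 → Act A → P2 → Prop) : (P1 ⊕ P2) → Act A → (P1 ⊕ P2) → Prop
  | .inl p, α, .inl q => T1 p α q
  | .inr p, α, .inr q => T2 p α q
  | _, _, _ => False

/-- A strong bisimulation. -/
def IsSB {A Proc : Type} (Tr : Proc → Act A → Proc → Prop)
    (B : Proc → Proc → Prop) : Prop :=
  (∀ P Q, B P Q → B Q P) ∧
  (∀ P Q (α : Act A) P', B P Q → Tr P α P' → ∃ Q', Tr Q α Q' ∧ B P' Q')

/-- Strong bisimilarity. -/
def SBisim {A Proc : Type} (Tr : Proc → Act A → Proc → Prop) (P Q : Proc) : Prop :=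
  ∃ B, IsSB Tr B ∧ B P Q

/-- Reachability in an LTS. -/
def Reachable {A Proc : Type} (Tr : Proc → Act A → Proc → Prop) :
    Proc → Proc → Prop :=
  Relation.ReflTransGen (fun P Q => ∃ α, Tr P α Q)

/-- A process is countably branching if every reachable state has countably
many outgoing transitions. -/
def CountablyBranching {A Proc : Type} (Tr : Proc → Act A → Proc → Prop)
    (P : Proc) : Prop :=
  ∀ Q, Reachable Tr P Q → Countable {x : Act A × Proc // Tr Q x.1 x.2}


/-!
Unguarded recursion along a chain `z₀ = G₀ + z₁`, `z₁ = G₁ + z₂`, … unfolds, by induction on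
the derivation of a transition, to exactly the transitions of the summands `Gₙ`; with closed
summands `αₙ.Pₙ` this is the countable sum. For a countably branching process, enumerate the
transitions of each reachable state `Q` as `ℕ → Option (Act × Proc)` and use one such chain
per state, with summand `γ.z_{(R,0)}` for the `n`-th transition `Q -γ→ R` (and `0` for a gap).
Then `Q ↦ ⟨z_{(Q,0)}|S⟩` maps transitions onto transitions, so its graph on the reachable states
is a strong bisimulation.
-/

section Bisimulation

variable {A Proc : Type} {Tr : Proc → Act A → Proc → Prop}

theorem SBisim.of_forth_back (R : Proc → Proc → Prop)
    (forth : ∀ P Q α P', R P Q → Tr P α P' → ∃ Q', Tr Q α Q' ∧ R P' Q')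
    (back : ∀ P Q α Q', R P Q → Tr Q α Q' → ∃ P', Tr P α P' ∧ R P' Q')
    {P Q : Proc} (hPQ : R P Q) : SBisim Tr P Q := by
  refine ⟨fun X Y => R X Y ∨ R Y X, ⟨fun X Y => Or.symm, ?_⟩, Or.inl hPQ⟩
  rintro X Y α X' (hXY | hYX) hX
  · obtain ⟨Y', hY, hR⟩ := forth X Y α X' hXY hX
    exact ⟨Y', hY, Or.inl hR⟩
  · obtain ⟨Y', hY, hR⟩ := back Y X α X' hYX hX
    exact ⟨Y', hY, Or.inr hR⟩

theorem sbisim_sumTr_of_tr_iff {Proc' : Type} {Tr' : Proc' → Act A → Proc' → Prop}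
    (φ : Proc → Proc') {P : Proc}
    (hφ : ∀ Q, Reachable Tr P Q → ∀ α X, Tr' (φ Q) α X ↔ ∃ R, Tr Q α R ∧ X = φ R) :
    SBisim (SumTr Tr Tr') (.inl P) (.inr (φ P)) := by
  refine SBisim.of_forth_back (fun X Y => ∃ Q, Reachable Tr P Q ∧ X = .inl Q ∧ Y = .inr (φ Q))
    ?_ ?_ ⟨P, .refl, rfl, rfl⟩
  · rintro _ _ α (R | _) ⟨Q, hQ, rfl, rfl⟩ hT
    · exact ⟨.inr (φ R), (hφ Q hQ α _).2 ⟨R, hT, rfl⟩, R, hQ.tail ⟨α, hT⟩, rfl, rfl⟩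
    · exact hT.elim
  · rintro _ _ α (_ | X) ⟨Q, hQ, rfl, rfl⟩ hT
    · exact hT.elim
    · obtain ⟨R, hR, rfl⟩ := (hφ Q hQ α X).1 hT
      exact ⟨.inl R, hR, R, hQ.tail ⟨α, hR⟩, rfl, rfl⟩

end Bisimulation

section Expressions

variable {A V : Type}

theorem subst_of_closed {E : Expr A V} (σ : V → Expr A V) (hE : Closed E) : subst E σ = E := by
  induction E with
  | nil | fix => rfl
  | pre α E ih => exact congrArg _ (ih hE)
  | choice E F ihE ihF => exact congrArg₂ _ (ihE hE.1) (ihF hE.2)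
  | var => exact hE.elim

theorem not_etr_nil {α : Act A} {F : Expr A V} : ¬ ETr .nil α F := nofun

theorem etr_pre_iff {α β : Act A} {E F : Expr A V} : ETr (.pre α E) β F ↔ β = α ∧ F = E :=
  ⟨fun | .pre _ _ => ⟨rfl, rfl⟩, by rintro ⟨rfl, rfl⟩; exact .pre _ _⟩

/-- The specification `{y = G y + next y}`: unfolding `⟨x|chainSpec G next⟩` walks along the
orbit `x, next x, next² x, …` and offers every summand met on the way. -/
def chainSpec (G : V → Expr A V) (next : V → V) (y : V) : Expr A V :=
  .choice (G y) (.var (next y))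

/-- `P` is kept general so that the recursion is structural in the derivation `h`. -/
theorem ETr.exists_of_fix_chainSpec {G : V → Expr A V} {next : V → V} {β : Act A}
    {F P : Expr A V} (h : ETr P β F) {x : V} (hP : P = .fix x (chainSpec G next)) :
    ∃ n, ETr (subst (G (next^[n] x)) (fun y => .fix y (chainSpec G next))) β F :=
  match h, hP with
  | .fix h', rfl =>
    match h' with
    | .choiceL _ h => ⟨0, h⟩
    | .choiceR _ h =>
      let ⟨n, hn⟩ := ETr.exists_of_fix_chainSpec h rfl
      ⟨n + 1, hn⟩

theorem ETr.fix_chainSpec_of_iterate {G : V → Expr A V} {next : V → V} {β : Act A}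
    {F : Expr A V} (n : ℕ) {x : V}
    (h : ETr (subst (G (next^[n] x)) (fun y => .fix y (chainSpec G next))) β F) :
    ETr (.fix x (chainSpec G next)) β F := by
  induction n generalizing x with
  | zero => exact .fix (.choiceL _ h)
  | succ n ih => exact .fix (.choiceR _ (ih h))

theorem etr_fix_chainSpec_iff {G : V → Expr A V} {next : V → V} {x : V} {β : Act A}
    {F : Expr A V} :
    ETr (.fix x (chainSpec G next)) β F ↔
      ∃ n, ETr (subst (G (next^[n] x)) (fun y => .fix y (chainSpec G next))) β F :=
  ⟨fun h => h.exists_of_fix_chainSpec rfl, fun ⟨n, h⟩ => .fix_chainSpec_of_iterate n h⟩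

theorem etr_fix_countableSum_iff (α : ℕ → Act A) {E : ℕ → Expr A ℕ} (hE : ∀ i, Closed (E i))
    {β : Act A} {F : Expr A ℕ} :
    ETr (.fix 0 (chainSpec (fun i => .pre (α i) (E i)) (· + 1))) β F ↔
      ∃ i, β = α i ∧ F = E i := by
  have hsucc (n : ℕ) : (· + 1)^[n] 0 = n := (Nat.succ_iterate 0 n).trans (zero_add n)
  simp only [etr_fix_chainSpec_iff, hsucc, subst, subst_of_closed _ (hE _), etr_pre_iff]

end Expressions

section CountablyBranching

variable {A Proc : Type}

theorem Set.Countable.exists_option_enum {α : Type*} {s : Set α} (hs : s.Countable) :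
    ∃ e : ℕ → Option α, ∀ a, a ∈ s ↔ ∃ n, e n = some a := by
  have := hs.to_subtype
  let := Encodable.ofCountable s
  refine ⟨fun n => (Encodable.decode (α := s) n).map Subtype.val, fun a => ⟨fun ha => ?_, ?_⟩⟩
  · exact ⟨Encodable.encode (⟨a, ha⟩ : s), by simp⟩
  · rintro ⟨n, hn⟩
    obtain ⟨b, -, rfl⟩ := Option.map_eq_some_iff.1 hn
    exact b.2

def enumSummand (e : Proc → ℕ → Option (Act A × Proc)) (y : Proc × ℕ) : Expr A (Proc × ℕ) :=
  (e y.1 y.2).elim .nil fun t => .pre t.1 (.var (t.2, 0))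

theorem etr_subst_enumSummand_iff (e : Proc → ℕ → Option (Act A × Proc)) {Q : Proc} {n : ℕ}
    {σ : Proc × ℕ → Expr A (Proc × ℕ)} {β : Act A} {F : Expr A (Proc × ℕ)} :
    ETr (subst (enumSummand e (Q, n)) σ) β F ↔ ∃ R, e Q n = some (β, R) ∧ F = σ (R, 0) := by
  rw [enumSummand]
  cases e Q n with
  | none => simp [subst, not_etr_nil]
  | some t => simp [subst, etr_pre_iff, @eq_comm _ β, Prod.ext_iff, and_comm]

/-- The variable `(Q, n)` stands for the sum of the transitions `γ.R` listed by `e Q` from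
position `n` on, each continuing as the variable `(R, 0)`; so `⟨(Q, 0)|enumSpec e⟩` denotes `Q`. -/
def enumSpec (e : Proc → ℕ → Option (Act A × Proc)) : Proc × ℕ → Expr A (Proc × ℕ) :=
  chainSpec (enumSummand e) (Prod.map id Nat.succ)

theorem etr_fix_enumSpec_iff (e : Proc → ℕ → Option (Act A × Proc)) {Q : Proc} {β : Act A}
    {F : Expr A (Proc × ℕ)} :
    ETr (.fix (Q, 0) (enumSpec e)) β F ↔
      ∃ R, (∃ n, e Q n = some (β, R)) ∧ F = .fix (R, 0) (enumSpec e) := by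
  have horbit (n : ℕ) : (Prod.map id Nat.succ)^[n] (Q, 0) = (Q, n) := by
    simp [Prod.map_iterate, Nat.succ_iterate]
  rw [enumSpec, etr_fix_chainSpec_iff]
  simp only [horbit, etr_subst_enumSummand_iff, ← exists_and_right]
  exact exists_comm

theorem exists_closed_sbisim_of_countablyBranching {Tr : Proc → Act A → Proc → Prop}
    {P : Proc} (hP : CountablyBranching Tr P) :
    ∃ E : Expr A (Proc × ℕ), Closed E ∧ SBisim (SumTr Tr ETr) (.inl P) (.inr E) := by
  have enum (Q : Proc) : ∃ e : ℕ → Option (Act A × Proc), Reachable Tr P Q →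
      ∀ γ R, Tr Q γ R ↔ ∃ n, e n = some (γ, R) := by
    by_cases hQ : Reachable Tr P Q
    · obtain ⟨e, he⟩ := (Set.countable_coe_iff.1 (hP Q hQ)).exists_option_enum
      exact ⟨e, fun _ γ R => he (γ, R)⟩
    · exact ⟨fun _ => none, fun h => (hQ h).elim⟩
  choose e he using enum
  refine ⟨.fix (P, 0) (enumSpec e), trivial, ?_⟩
  refine sbisim_sumTr_of_tr_iff (fun Q => Expr.fix (Q, 0) (enumSpec e)) fun Q hQ γ F => ?_
  simp only [etr_fix_enumSpec_iff, he Q hQ]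

end CountablyBranching

/-- Every countably branching process can be denoted, up to strong
bisimilarity, by a closed CCSP expression using only inaction, action
prefixing, choice and (possibly unguarded) recursion; moreover the countable
choice `∑_{i∈ℕ} α_i.P_i` is expressed by the unguarded recursive specification
`⟨z₀ | {z_i = α_i.P_i + z_{i+1} | i ∈ ℕ}⟩`. -/
theorem countably_branching_expressible {A Proc : Type}
    (Tr : Proc → Act A → Proc → Prop) :
    (∀ P : Proc, CountablyBranching Tr P →
      ∃ E : Expr A (Proc × ℕ), Closed E ∧
        SBisim (SumTr Tr (ETr (A := A) (V := Proc × ℕ)))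
          (Sum.inl P) (Sum.inr E)) ∧
    (∀ (α : ℕ → Act A) (E : ℕ → Expr A ℕ), (∀ i, Closed (E i)) →
      ∀ (β : Act A) (F : Expr A ℕ),
        ETr (Expr.fix 0
            (fun i => Expr.choice (Expr.pre (α i) (E i)) (Expr.var (i + 1)))) β F
          ↔ ∃ i, β = α i ∧ F = E i) :=
  ⟨fun _ hP => exists_closed_sbisim_of_countablyBranching hP,
    fun α _ hE _ _ => etr_fix_countableSum_iff α hE⟩
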